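/- Let E be a finite set and R an equivalence relation on 2^E. Then R is the cospanning relation of a greedoid on E (i.e., there exists a greedoid (E, F) with rank closure operator σ such that (X, Y) ∈ R iff σ(X) = σ(Y)) if and only if R satisfies, for all X, Y, Z ⊆ E and distinct x, y ∉ X: (R1) (X, Y) ∈ R implies (X, X ∪ Y) ∈ R; (R2) X ⊆ Y ⊆ Z and (X, Z) ∈ R imply (X, Y) ∈ R; and (R4) if (X ∪ {y}, X ∪ {x, y}) ∈ R but (X ∪ {x}, X ∪ {x, y}) ∉ R, then there exists z ∈ X ∪ {x} with (X ∪ {x} \ {z}, X ∪ {x}) ∈ R. Moreover, in that case F is exactly the family of inclusion-minimal sets of the equivalence classes of R. -/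

import Mathlib

/-- A greedoid on `E`: `∅` is feasible and larger feasible sets augment smaller ones. -/
def IsGreedoid {E : Type*} (F : Set (Set E)) : Prop :=
  ∅ ∈ F ∧ ∀ X ∈ F, ∀ Y ∈ F, Y.ncard < X.ncard → ∃ x ∈ X \ Y, insert x Y ∈ F

/-- The rank function of a set system: `r X = max {|A| : A ⊆ X, A ∈ F}`. -/
noncomputable def greedoidRank {E : Type*} (F : Set (Set E)) (X : Set E) : ℕ :=
  sSup {n | ∃ A ∈ F, A ⊆ X ∧ A.ncard = n}

/-- The rank closure operator `σ X = {x : r (X ∪ {x}) = r X}`. -/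
noncomputable def rankClosure {E : Type*} (F : Set (Set E)) (X : Set E) : Set E :=
  {x | greedoidRank F (insert x X) = greedoidRank F X}

/-!
In a greedoid the rank is locally submodular: if `r (X + x) = r (X + y) = r X` then
`r (X + x + y) = r X`, since an augmentation of a basis of `X` from a basis of `X + x + y` would
raise the rank of `X + x`, `X + y` or `X`. Hence elements of `σ X` can be added to `X` one at a
time without raising the rank, and `σ X = σ Y ↔ X ⊆ σ Y ∧ Y ⊆ σ X`. (R1), (R2), (R4) and the
description of `F` as the sets whose closure differs from that of each proper subset follow.

Conversely, call a set feasible if it is minimal in its `R`-class. By (R4) a feasible `A` with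
`A + e` not feasible satisfies `R A (A + e)`, so by (R1) a feasible subset of `X` that cannot be
augmented inside `X` is equivalent to `X`: feasible subsets of `X` extend to bases of `X`. All
bases of `X` have the same size, by induction on `X`: if `|N| < |P|`, the feasible sets on the
way up to `P` fit one element at a time into bases of size `|N|`, since each step happens inside
a proper subset `W + a` of `X`. This gives the augmentation axiom, and the rank closure becomes
`σ X = {e | R X (X + e)}`.
-/

section GreedoidRank

variable {E : Type*} {F : Set (Set E)} {X Y A : Set E}

theorem subset_rankClosure (F : Set (Set E)) (X : Set E) : X ⊆ rankClosure F X := by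
  intro e he
  simp only [rankClosure, Set.mem_ofPred_eq, Set.insert_eq_of_mem he]

variable [Finite E]

theorem ncard_le_greedoidRank (hA : A ∈ F) (hAX : A ⊆ X) : A.ncard ≤ greedoidRank F X :=
  le_csSup ⟨X.ncard, by rintro _ ⟨B, -, hBX, rfl⟩; exact Set.ncard_le_ncard hBX⟩
    ⟨A, hA, hAX, rfl⟩

theorem exists_ncard_eq_greedoidRank (hF : ∅ ∈ F) (X : Set E) :
    ∃ A ∈ F, A ⊆ X ∧ A.ncard = greedoidRank F X :=
  Nat.sSup_mem (s := {n | ∃ A ∈ F, A ⊆ X ∧ A.ncard = n})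
    ⟨0, ∅, hF, X.empty_subset, Set.ncard_empty E⟩
    ⟨X.ncard, by rintro _ ⟨B, -, hBX, rfl⟩; exact Set.ncard_le_ncard hBX⟩

theorem greedoidRank_le_ncard (hF : ∅ ∈ F) (X : Set E) : greedoidRank F X ≤ X.ncard := by
  obtain ⟨A, -, hAX, hA⟩ := exists_ncard_eq_greedoidRank hF X
  exact hA ▸ Set.ncard_le_ncard hAX

theorem greedoidRank_mono (hF : ∅ ∈ F) (h : X ⊆ Y) :
    greedoidRank F X ≤ greedoidRank F Y := by
  obtain ⟨A, hA, hAX, hAr⟩ := exists_ncard_eq_greedoidRank hF X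
  exact hAr ▸ ncard_le_greedoidRank hA (hAX.trans h)

theorem mem_iff_greedoidRank_eq_ncard (hF : ∅ ∈ F) :
    A ∈ F ↔ greedoidRank F A = A.ncard := by
  refine ⟨fun hA => (greedoidRank_le_ncard hF A).antisymm (ncard_le_greedoidRank hA subset_rfl),
    fun h => ?_⟩
  obtain ⟨B, hB, hBA, hBr⟩ := exists_ncard_eq_greedoidRank hF A
  rwa [← Set.eq_of_subset_of_ncard_le hBA (by omega)]

theorem mem_rankClosure_insert (hF : IsGreedoid F) {a e : E} (ha : a ∈ rankClosure F X)
    (he : e ∈ rankClosure F X) : e ∈ rankClosure F (insert a X) := by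
  show greedoidRank F (insert e (insert a X)) = greedoidRank F (insert a X)
  rw [ha]
  refine le_antisymm ?_
    (greedoidRank_mono hF.1 ((Set.subset_insert _ _).trans (Set.subset_insert _ _)))
  obtain ⟨A, hA, hAX, hAr⟩ := exists_ncard_eq_greedoidRank hF.1 (insert e (insert a X))
  obtain ⟨B, hB, hBX, hBr⟩ := exists_ncard_eq_greedoidRank hF.1 X
  by_contra! hlt
  obtain ⟨f, hf, hfB⟩ := hF.2 A hA B hB (by omega)
  -- whichever of `e`, `a` or an element of `X` augments `B`, it lies in the closure of `X`
  have hfX : greedoidRank F (insert f X) = greedoidRank F X := by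
    rcases hAX hf.1 with rfl | rfl | hfX
    exacts [he, ha, by rw [Set.insert_eq_of_mem hfX]]
  have := ncard_le_greedoidRank hfB (Set.insert_subset_insert hBX)
  rw [Set.ncard_insert_of_notMem hf.2, hfX] at this
  omega

theorem greedoidRank_union_eq (hF : IsGreedoid F) {S : Set E} (hS : S ⊆ rankClosure F X) :
    greedoidRank F (X ∪ S) = greedoidRank F X := by
  induction S, S.toFinite using Set.Finite.induction_on generalizing X with
  | empty => rw [Set.union_empty]
  | @insert a S _ _ ih =>
    have ha := hS (Set.mem_insert a S)
    rw [Set.union_insert, ← Set.insert_union, ih fun e he => mem_rankClosure_insert hF ha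
      (hS (Set.mem_insert_of_mem a he))]
    exact ha

theorem rankClosure_union_eq (hF : IsGreedoid F) {S : Set E} (hS : S ⊆ rankClosure F X) :
    rankClosure F (X ∪ S) = rankClosure F X := by
  ext e
  simp only [rankClosure, Set.mem_ofPred_eq, greedoidRank_union_eq hF hS]
  constructor
  · intro he
    refine le_antisymm ?_ (greedoidRank_mono hF.1 (Set.subset_insert e X))
    exact he ▸ greedoidRank_mono hF.1 (Set.insert_subset_insert Set.subset_union_left)
  · intro he
    rw [← Set.union_insert, greedoidRank_union_eq hF (Set.insert_subset he hS)]

theorem rankClosure_insert_eq (hF : IsGreedoid F) {e : E} (he : e ∈ rankClosure F X) :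
    rankClosure F (insert e X) = rankClosure F X := by
  rw [Set.insert_eq, Set.union_comm, rankClosure_union_eq hF (Set.singleton_subset_iff.2 he)]

theorem rankClosure_eq_rankClosure_iff (hF : IsGreedoid F) :
    rankClosure F X = rankClosure F Y ↔ X ⊆ rankClosure F Y ∧ Y ⊆ rankClosure F X := by
  refine ⟨fun h => ⟨h ▸ subset_rankClosure F X, h ▸ subset_rankClosure F Y⟩, fun ⟨hX, hY⟩ => ?_⟩
  rw [← rankClosure_union_eq hF hY, ← rankClosure_union_eq hF hX, Set.union_comm]

theorem exists_rankClosure_sdiff_singleton_eq (hF : IsGreedoid F) (hA : A ∉ F) :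
    ∃ z ∈ A, rankClosure F (A \ {z}) = rankClosure F A := by
  obtain ⟨B, hB, hBA, hBr⟩ := exists_ncard_eq_greedoidRank hF.1 A
  obtain ⟨z, hzA, hzB⟩ : ∃ z ∈ A, z ∉ B :=
    Set.not_subset.1 fun hAB => hA (Set.Subset.antisymm hBA hAB ▸ hB)
  have hz : z ∈ rankClosure F (A \ {z}) := by
    show greedoidRank F (insert z (A \ {z})) = greedoidRank F (A \ {z})
    rw [Set.insert_sdiff_singleton, Set.insert_eq_of_mem hzA]
    refine le_antisymm ?_ (greedoidRank_mono hF.1 Set.sdiff_subset)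
    exact hBr ▸ ncard_le_greedoidRank hB (Set.subset_sdiff_singleton hBA hzB)
  refine ⟨z, hzA, ?_⟩
  rw [← rankClosure_insert_eq hF hz, Set.insert_sdiff_singleton, Set.insert_eq_of_mem hzA]

theorem rankClosure_ne_of_ssubset (hF : IsGreedoid F) (hA : A ∈ F) (hYA : Y ⊂ A) :
    rankClosure F A ≠ rankClosure F Y := by
  intro h
  have hAY := greedoidRank_union_eq hF (h ▸ subset_rankClosure F A)
  rw [Set.union_eq_self_of_subset_left hYA.subset,
    (mem_iff_greedoidRank_eq_ncard hF.1).1 hA] at hAY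
  have := greedoidRank_le_ncard hF.1 Y
  have := Set.ncard_lt_ncard hYA
  omega

theorem eq_setOf_rankClosure_ne (hF : IsGreedoid F) :
    F = {A | ∀ Y, Y ⊂ A → rankClosure F A ≠ rankClosure F Y} := by
  ext A
  refine ⟨fun hA Y hYA => rankClosure_ne_of_ssubset hF hA hYA, fun hA => ?_⟩
  by_contra hAF
  obtain ⟨z, hz, hzA⟩ := exists_rankClosure_sdiff_singleton_eq hF hAF
  exact hA _ (Set.sdiff_singleton_ssubset.2 hz) hzA.symm

theorem rankClosure_union_eq_of_eq (hF : IsGreedoid F) (h : rankClosure F X = rankClosure F Y) :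
    rankClosure F (X ∪ Y) = rankClosure F X :=
  rankClosure_union_eq hF (h ▸ subset_rankClosure F Y)

theorem rankClosure_eq_of_subset_of_subset {Z : Set E} (hF : IsGreedoid F) (hXY : X ⊆ Y)
    (hYZ : Y ⊆ Z) (h : rankClosure F X = rankClosure F Z) :
    rankClosure F X = rankClosure F Y :=
  (rankClosure_eq_rankClosure_iff hF).2
    ⟨hXY.trans (subset_rankClosure F Y), hYZ.trans (h ▸ subset_rankClosure F Z)⟩

theorem exists_rankClosure_insert_sdiff_singleton_eq {x y : E} (hF : IsGreedoid F)
    (hx : x ∉ X)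
    (hy : rankClosure F (insert y X) = rankClosure F (insert x (insert y X)))
    (hxy : rankClosure F (insert x X) ≠ rankClosure F (insert x (insert y X))) :
    ∃ z ∈ insert x X, rankClosure F (insert x X \ {z}) = rankClosure F (insert x X) := by
  refine exists_rankClosure_sdiff_singleton_eq hF fun hxF => ?_
  have hxσ : x ∈ rankClosure F (insert y X) := hy ▸ subset_rankClosure F _ (Set.mem_insert x _)
  have hyσ : y ∉ rankClosure F (insert x X) := fun h =>
    hxy (by rw [Set.insert_comm, rankClosure_insert_eq hF h])
  have hlt : greedoidRank F (insert x X) < greedoidRank F (insert y (insert x X)) :=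
    (greedoidRank_mono hF.1 (Set.subset_insert y _)).lt_of_ne (Ne.symm hyσ)
  rw [Set.insert_comm, hxσ, (mem_iff_greedoidRank_eq_ncard hF.1).1 hxF,
    Set.ncard_insert_of_notMem hx] at hlt
  have := greedoidRank_le_ncard hF.1 (insert y X)
  have := Set.ncard_insert_le y X
  omega

end GreedoidRank

namespace CospanningRelation

variable {E : Type*} {R : Set E → Set E → Prop}

def minimalSets (R : Set E → Set E → Prop) : Set (Set E) :=
  {A | ∀ Y : Set E, Y ⊂ A → ¬ R A Y}

structure IsBasis (R : Set E → Set E → Prop) (B X : Set E) : Prop where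
  mem : B ∈ minimalSets R
  subset : B ⊆ X
  rel : R B X

theorem empty_mem_minimalSets : ∅ ∈ minimalSets R :=
  fun _ hY => absurd hY not_lt_bot

variable (hR : Equivalence R)
  (hR1 : ∀ X Y : Set E, R X Y → R X (X ∪ Y))
  (hR2 : ∀ X Y Z : Set E, X ⊆ Y → Y ⊆ Z → R X Z → R X Y)
  (hR4 : ∀ (X : Set E) (x y : E), x ≠ y → x ∉ X → y ∉ X →
    R (insert y X) (insert x (insert y X)) →
    ¬ R (insert x X) (insert x (insert y X)) →
    ∃ z ∈ insert x X, R ((insert x X) \ {z}) (insert x X))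
include hR

include hR2 in
theorem rel_of_subset_of_subset {A X Y : Set E} (hAX : R A X) (hAY : A ⊆ Y) (hYX : Y ⊆ X) :
    R Y X :=
  hR.trans (hR.symm (hR2 A Y X hAY hYX hAX)) hAX

include hR2 in
theorem exists_rel_sdiff_singleton {A : Set E} (hA : A ∉ minimalSets R) :
    ∃ z ∈ A, R (A \ {z}) A := by
  simp only [minimalSets, Set.mem_ofPred_eq, not_forall, not_not] at hA
  obtain ⟨Y, hYA, hAY⟩ := hA
  obtain ⟨z, hzA, hzY⟩ := Set.exists_of_ssubset hYA
  exact ⟨z, hzA, rel_of_subset_of_subset hR hR2 (hR.symm hAY)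
    (Set.subset_sdiff_singleton hYA.subset hzY) Set.sdiff_subset⟩

include hR2 hR4 in
theorem rel_insert_of_insert_notMem {A : Set E} {e : E} (hA : A ∈ minimalSets R) (he : e ∉ A)
    (hins : insert e A ∉ minimalSets R) : R A (insert e A) := by
  obtain ⟨z, hz, hzA⟩ := exists_rel_sdiff_singleton hR hR2 hins
  rcases eq_or_ne z e with rfl | hze
  · rwa [Set.insert_sdiff_self_of_notMem he] at hzA
  have hzA' : z ∈ A := hz.resolve_left hze
  -- apply (R4) to `A \ {z}` with the two new elements `z` and `e`
  have hAz : insert z (A \ {z}) = A := by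
    rw [Set.insert_sdiff_singleton, Set.insert_eq_of_mem hzA']
  have heAz : insert e (A \ {z}) = insert e A \ {z} := Set.insert_sdiff_singleton_comm hze.symm A
  by_contra hfree
  obtain ⟨w, hw, hwA⟩ := hR4 (A \ {z}) z e hze (fun h => h.2 rfl) (fun h => he h.1)
    (by rwa [Set.insert_comm z e, hAz, heAz])
    (by rwa [Set.insert_comm z e, hAz])
  rw [hAz] at hw hwA
  exact hA _ (Set.sdiff_singleton_ssubset.2 hw) (hR.symm hwA)

include hR1 hR2 in
theorem rel_insert_of_rel {X Y : Set E} {e : E} (hXY : R X Y) (he : R X (insert e X)) :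
    R Y (insert e Y) := by
  have heXY := hR.trans (hR.symm he) hXY
  have := hR1 _ _ heXY
  rw [Set.insert_union] at this
  exact hR2 _ _ _ (Set.subset_insert e Y) (Set.insert_subset_insert Set.subset_union_right)
    (hR.trans (hR.symm heXY) this)

variable [Finite E]

include hR1 in
theorem rel_union_of_forall_rel_insert {A S : Set E} (h : ∀ e ∈ S, R A (insert e A)) :
    R A (A ∪ S) := by
  induction S, S.toFinite using Set.Finite.induction_on with
  | empty => rw [Set.union_empty]; exact hR.refl A
  | @insert a S _ _ ih =>
    have hAS := ih fun e he => h e (Set.mem_insert_of_mem a he)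
    have hSa := hR1 _ _ (hR.trans (hR.symm hAS) (h a (Set.mem_insert a S)))
    have hunion : A ∪ S ∪ insert a A = A ∪ insert a S := by
      ext; simp only [Set.mem_union, Set.mem_insert_iff]; tauto
    exact hR.trans hAS (hunion ▸ hSa)

include hR1 hR2 hR4 in
theorem rel_of_forall_insert_notMem {B X : Set E} (hB : B ∈ minimalSets R) (hBX : B ⊆ X)
    (hmax : ∀ e ∈ X \ B, insert e B ∉ minimalSets R) : R B X := by
  have := rel_union_of_forall_rel_insert hR hR1 (S := X \ B)
    fun e he => rel_insert_of_insert_notMem hR hR2 hR4 hB he.2 (hmax e he)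
  rwa [Set.union_sdiff_cancel hBX] at this

include hR1 hR2 hR4 in
theorem exists_isBasis_superset {U X : Set E} (hU : U ∈ minimalSets R) (hUX : U ⊆ X) :
    ∃ B, IsBasis R B X ∧ U ⊆ B := by
  obtain ⟨B, ⟨hB, hUB, hBX⟩, hBmax⟩ := Set.exists_max_image
    {B | B ∈ minimalSets R ∧ U ⊆ B ∧ B ⊆ X} Set.ncard (Set.toFinite _) ⟨U, hU, subset_rfl, hUX⟩
  refine ⟨B, ⟨hB, hBX, ?_⟩, hUB⟩
  refine rel_of_forall_insert_notMem hR hR1 hR2 hR4 hB hBX fun e he heB => ?_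
  have := hBmax _ ⟨heB, hUB.trans (Set.subset_insert e B), Set.insert_subset he.1 hBX⟩
  rw [Set.ncard_insert_of_notMem he.2] at this
  omega

include hR1 hR2 hR4 in
theorem exists_insert_mem_of_ssubset {A U : Set E} (hA : A ∈ minimalSets R)
    (hU : U ∈ minimalSets R) (hUA : U ⊂ A) : ∃ e ∈ A \ U, insert e U ∈ minimalSets R := by
  by_contra! hmax
  exact hA U hUA (hR.symm (rel_of_forall_insert_notMem hR hR1 hR2 hR4 hU hUA.subset hmax))

include hR1 hR2 hR4 in
theorem minimalSets_induction {P : Set E} (hP : P ∈ minimalSets R) {Q : Set E → Prop}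
    (h0 : Q ∅)
    (hstep : ∀ C a, a ∈ P → insert a C ∈ minimalSets R → Q C → Q (insert a C)) : Q P := by
  obtain ⟨C, ⟨hC, hCP, hQC⟩, hCmax⟩ := Set.exists_max_image
    {C | C ∈ minimalSets R ∧ C ⊆ P ∧ Q C} Set.ncard (Set.toFinite _)
    ⟨∅, empty_mem_minimalSets, P.empty_subset, h0⟩
  obtain rfl | hCP := hCP.eq_or_ssubset
  · exact hQC
  obtain ⟨e, he, heC⟩ := exists_insert_mem_of_ssubset hR hR1 hR2 hR4 hP hC hCP
  have := hCmax _ ⟨heC, Set.insert_subset he.1 hCP.subset, hstep C e he.1 heC hQC⟩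
  rw [Set.ncard_insert_of_notMem he.2] at this
  omega

section Equicardinality

variable {X : Set E}
  (IH : ∀ Y < X, ∀ {B₁ B₂ : Set E}, IsBasis R B₁ Y → IsBasis R B₂ Y → B₁.ncard = B₂.ncard)
include IH

include hR1 hR2 hR4 in
theorem exists_isBasis_insert {W C : Set E} {a : E} (hW : IsBasis R W X)
    (hC : insert a C ∈ minimalSets R) (hCW : C ⊆ W) (hWX : insert a W ⊂ X) :
    ∃ W', IsBasis R W' X ∧ W'.ncard = W.ncard ∧ insert a C ⊆ W' := by
  have hWaW : R W (insert a W) := hR2 _ _ _ (Set.subset_insert a W) hWX.subset hW.rel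
  obtain ⟨W', hW', hCW'⟩ :=
    exists_isBasis_superset hR hR1 hR2 hR4 hC (Set.insert_subset_insert hCW)
  refine ⟨W', ⟨hW'.mem, hW'.subset.trans hWX.subset, hR.trans hW'.rel ?_⟩,
    IH _ hWX hW' ⟨hW.mem, Set.subset_insert a W, hWaW⟩, hCW'⟩
  exact rel_of_subset_of_subset hR hR2 hW.rel (Set.subset_insert a W) hWX.subset

include hR1 hR2 hR4 in
theorem ncard_le_of_isBasis {N P : Set E} (hN : IsBasis R N X) (hP : IsBasis R P X) :
    P.ncard ≤ N.ncard := by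
  by_contra! hlt
  have hPX : P ⊂ X := by
    refine hP.subset.ssubset_of_ne fun hPX =>
      hP.mem N ?_ (hR.trans (hPX ▸ hP.rel) (hR.symm hN.rel))
    exact (hPX ▸ hN.subset).ssubset_of_ne (by rintro rfl; omega)
  -- every feasible subset of `P`, built up element by element, fits into a basis of size `|N|`
  obtain ⟨W, -, hWN, hPW⟩ : ∃ W, IsBasis R W X ∧ W.ncard = N.ncard ∧ P ⊆ W := by
    refine minimalSets_induction hR hR1 hR2 hR4 hP.mem
      (Q := fun C => ∃ W, IsBasis R W X ∧ W.ncard = N.ncard ∧ C ⊆ W)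
      ⟨N, hN, rfl, N.empty_subset⟩ ?_
    rintro C a haP hC ⟨W, hW, hWN, hCW⟩
    by_cases haW : a ∈ W
    · exact ⟨W, hW, hWN, Set.insert_subset haW hCW⟩
    have hWX : insert a W ⊂ X := by
      refine (Set.insert_subset (hP.subset haP) hW.subset).ssubset_of_ne fun hWX => ?_
      have := Set.ncard_lt_ncard hPX
      rw [← hWX, Set.ncard_insert_of_notMem haW] at this
      omega
    obtain ⟨W', hW', hW'W, hCW'⟩ := exists_isBasis_insert hR hR1 hR2 hR4 IH hW hC hCW hWX
    exact ⟨W', hW', hW'W.trans hWN, hCW'⟩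
  have := Set.ncard_le_ncard hPW
  omega

end Equicardinality

include hR1 hR2 hR4 in
theorem IsBasis.ncard_eq {X B₁ B₂ : Set E} (h₁ : IsBasis R B₁ X) (h₂ : IsBasis R B₂ X) :
    B₁.ncard = B₂.ncard := by
  induction X using WellFoundedLT.induction generalizing B₁ B₂ with
  | _ X IH =>
    exact (ncard_le_of_isBasis hR hR1 hR2 hR4 IH h₂ h₁).antisymm
      (ncard_le_of_isBasis hR hR1 hR2 hR4 IH h₁ h₂)

include hR1 hR2 hR4 in
theorem isGreedoid_minimalSets : IsGreedoid (minimalSets R) := by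
  refine ⟨empty_mem_minimalSets, fun U hU V hV hlt => ?_⟩
  by_contra! hmax
  have hVUV : IsBasis R V (U ∪ V) := ⟨hV, Set.subset_union_right,
    rel_of_forall_insert_notMem hR hR1 hR2 hR4 hV Set.subset_union_right
      fun e he => hmax e ⟨he.1.resolve_right he.2, he.2⟩⟩
  obtain ⟨B, hB, hUB⟩ := exists_isBasis_superset hR hR1 hR2 hR4 hU Set.subset_union_left
  have := Set.ncard_le_ncard hUB
  have := hB.ncard_eq hR hR1 hR2 hR4 hVUV
  omega

include hR1 hR2 hR4 in
theorem greedoidRank_minimalSets {B X : Set E} (hB : IsBasis R B X) :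
    greedoidRank (minimalSets R) X = B.ncard := by
  refine le_antisymm ?_ (ncard_le_greedoidRank hB.mem hB.subset)
  obtain ⟨A, hA, hAX, hAr⟩ := exists_ncard_eq_greedoidRank empty_mem_minimalSets X
  obtain ⟨B', hB', hAB'⟩ := exists_isBasis_superset hR hR1 hR2 hR4 hA hAX
  rw [← hAr, ← hB'.ncard_eq hR hR1 hR2 hR4 hB]
  exact Set.ncard_le_ncard hAB'

include hR1 hR2 hR4 in
theorem mem_rankClosure_minimalSets {X : Set E} {e : E} :
    e ∈ rankClosure (minimalSets R) X ↔ R X (insert e X) := by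
  obtain ⟨B, hB, -⟩ :=
    exists_isBasis_superset hR hR1 hR2 hR4 empty_mem_minimalSets X.empty_subset
  have hBX : B ⊆ insert e X := hB.subset.trans (Set.subset_insert e X)
  show greedoidRank _ (insert e X) = greedoidRank _ X ↔ _
  rw [greedoidRank_minimalSets hR hR1 hR2 hR4 hB]
  constructor
  · intro he
    refine hR.trans (hR.symm hB.rel) (rel_of_forall_insert_notMem hR hR1 hR2 hR4 hB.mem hBX ?_)
    intro f hf hfB
    have := ncard_le_greedoidRank hfB (Set.insert_subset hf.1 hBX)
    rw [Set.ncard_insert_of_notMem hf.2, he] at this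
    omega
  · exact fun h => greedoidRank_minimalSets hR hR1 hR2 hR4 ⟨hB.mem, hBX, hR.trans hB.rel h⟩

include hR1 hR2 hR4 in
theorem rel_iff_rankClosure_eq (X Y : Set E) :
    R X Y ↔ rankClosure (minimalSets R) X = rankClosure (minimalSets R) Y := by
  have hσ {X e} := mem_rankClosure_minimalSets (X := X) (e := e) hR hR1 hR2 hR4
  refine ⟨fun hXY => Set.ext fun e => ?_, fun h => ?_⟩
  · rw [hσ, hσ]
    exact ⟨rel_insert_of_rel hR hR1 hR2 hXY, rel_insert_of_rel hR hR1 hR2 (hR.symm hXY)⟩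
  have hXY := rel_union_of_forall_rel_insert hR hR1 (A := X) (S := Y)
    fun e he => hσ.1 (h ▸ subset_rankClosure _ Y he)
  have hYX := rel_union_of_forall_rel_insert hR hR1 (A := Y) (S := X)
    fun e he => hσ.1 (h.symm ▸ subset_rankClosure _ X he)
  rw [Set.union_comm] at hYX
  exact hR.trans hXY (hR.symm hYX)

end CospanningRelation

theorem stmt14 {E : Type*} [Fintype E] (R : Set E → Set E → Prop) (hR : Equivalence R) :
    ((∃ F : Set (Set E), IsGreedoid F ∧
        ∀ X Y : Set E, R X Y ↔ rankClosure F X = rankClosure F Y) ↔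
      ((∀ X Y : Set E, R X Y → R X (X ∪ Y)) ∧
       (∀ X Y Z : Set E, X ⊆ Y → Y ⊆ Z → R X Z → R X Y) ∧
       (∀ (X : Set E) (x y : E), x ≠ y → x ∉ X → y ∉ X →
         R (insert y X) (insert x (insert y X)) →
         ¬ R (insert x X) (insert x (insert y X)) →
         ∃ z ∈ insert x X, R ((insert x X) \ {z}) (insert x X)))) ∧
    (∀ F : Set (Set E), IsGreedoid F →
      (∀ X Y : Set E, R X Y ↔ rankClosure F X = rankClosure F Y) →
      F = {X : Set E | ∀ Y : Set E, Y ⊂ X → ¬ R X Y}) := by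
  refine ⟨⟨?_, fun ⟨hR1, hR2, hR4⟩ => ⟨CospanningRelation.minimalSets R,
    CospanningRelation.isGreedoid_minimalSets hR hR1 hR2 hR4,
    CospanningRelation.rel_iff_rankClosure_eq hR hR1 hR2 hR4⟩⟩, fun F hF hcos => ?_⟩
  · rintro ⟨F, hF, hcos⟩
    simp only [hcos]
    exact ⟨fun X Y h => (rankClosure_union_eq_of_eq hF h).symm,
      fun X Y Z hXY hYZ => rankClosure_eq_of_subset_of_subset hF hXY hYZ,
      fun X x y _ hx _ => exists_rankClosure_insert_sdiff_singleton_eq hF hx⟩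
  · simp only [hcos]
    exact eq_setOf_rankClosure_ne hF
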